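/- arXiv:1006.0074 — 3 statements merged into one kernel-verified Lean document; each statement's English description precedes it below -/
import Mathlib

section
/- Let α, β ∈ ℝ with α² ≠ β and β ≠ 0, and let λ₁ = -α - √(α²-β), λ₂ = -α + √(α²-β) (distinct roots of λ² + 2αλ + β = 0). For any sequence (γᵢ), every solution (ξᵢ) of the forced linear recurrence ξ_{i+2} + 2α ξ_{i+1} + β ξᵢ = γᵢ has the form ξᵢ = ω₁ λ₁ⁱ + ω₂ λ₂ⁱ + Σ_{τ=0}^{i-1} Σ_{s=0}^{τ-1} γ_s λ₁^{i+s-2τ} β^{τ-1-s} for suitable constants ω₁, ω₂ determined by ξ₀ and ξ₁. -/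
/-!
Since `λ₁ + λ₂ = -2α` and `λ₁ λ₂ = β`, the recurrence reads `(E - λ₁)(E - λ₂) ξ = γ` for the shift
operator `E`. Inverting each first-order factor by the discrete Duhamel formula gives a particular
solution, which after `β = λ₁ λ₂` is the double sum of the statement; the difference from `ξ` solves
the homogeneous recurrence and so, as `λ₁ ≠ λ₂`, is a combination of `λ₁ⁱ` and `λ₂ⁱ`.
-/

open Finset

/-- Discrete Duhamel formula: the solution of `u (i + 1) = a * u i + f i` with `u 0 = 0`. -/
def duhamelSum {R : Type*} [CommRing R] (a : R) (f : ℕ → R) (i : ℕ) : R :=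
  ∑ τ ∈ range i, a ^ (i - 1 - τ) * f τ

section CommRing

variable {R : Type*} [CommRing R]

lemma duhamelSum_succ (a : R) (f : ℕ → R) (i : ℕ) :
    duhamelSum a f (i + 1) = a * duhamelSum a f i + f i := by
  rw [duhamelSum, sum_range_succ, Nat.add_sub_cancel, Nat.sub_self, pow_zero, one_mul,
    duhamelSum, mul_sum]
  congr 1
  refine sum_congr rfl fun τ hτ => ?_
  rw [← mul_assoc, ← pow_succ']
  congr 2
  have := mem_range.mp hτ
  omega

lemma duhamelSum_duhamelSum_add_two (l₁ l₂ : R) (g : ℕ → R) (i : ℕ) :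
    duhamelSum l₁ (duhamelSum l₂ g) (i + 2)
      = (l₁ + l₂) * duhamelSum l₁ (duhamelSum l₂ g) (i + 1)
        - l₁ * l₂ * duhamelSum l₁ (duhamelSum l₂ g) i + g i := by
  have e₁ := duhamelSum_succ l₁ (duhamelSum l₂ g) i
  have e₂ := duhamelSum_succ l₁ (duhamelSum l₂ g) (i + 1)
  have e₃ := duhamelSum_succ l₂ g i
  linear_combination e₂ + e₃ - l₂ * e₁

end CommRing

lemma exists_eq_mul_pow_add_mul_pow {K : Type*} [Field K] {l₁ l₂ : K} (hl : l₁ ≠ l₂)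
    {u : ℕ → K} (hu : ∀ i, u (i + 2) = (l₁ + l₂) * u (i + 1) - l₁ * l₂ * u i) :
    ∃ ω₁ ω₂ : K, ∀ i, u i = ω₁ * l₁ ^ i + ω₂ * l₂ ^ i := by
  have hne : l₂ - l₁ ≠ 0 := sub_ne_zero.mpr hl.symm
  set ω₂ := (u 1 - l₁ * u 0) / (l₂ - l₁)
  refine ⟨u 0 - ω₂, ω₂, fun i => ?_⟩
  suffices ∀ i, u i = (u 0 - ω₂) * l₁ ^ i + ω₂ * l₂ ^ i ∧
      u (i + 1) = (u 0 - ω₂) * l₁ ^ (i + 1) + ω₂ * l₂ ^ (i + 1) from (this i).1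
  intro i
  induction i with
  | zero =>
    refine ⟨by ring, ?_⟩
    simp only [ω₂]
    field_simp
    ring
  | succ i ih =>
    refine ⟨ih.2, ?_⟩
    rw [hu, ih.1, ih.2]
    ring

lemma mul_pow_div_pow_mul_mul_pow {K : Type*} [Field K] {l₁ : K} (hl₁ : l₁ ≠ 0) (l₂ c : K)
    {i τ r : ℕ} (hr : r < τ) (hτ : τ < i) :
    c * l₁ ^ (i + r) / l₁ ^ (2 * τ) * (l₁ * l₂) ^ (τ - 1 - r)
      = l₁ ^ (i - 1 - τ) * (l₂ ^ (τ - 1 - r) * c) := by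
  have hexp : i + r + (τ - 1 - r) = 2 * τ + (i - 1 - τ) := by omega
  rw [mul_pow, div_mul_eq_mul_div, div_eq_iff (pow_ne_zero _ hl₁)]
  linear_combination l₂ ^ (τ - 1 - r) * c * congrArg (l₁ ^ ·) hexp

theorem stmt2 (α β : ℝ) (hαβ : (α : ℝ) ^ 2 ≠ β) (hβ : β ≠ 0)
    (s : ℂ) (hs : s ^ 2 = (α : ℂ) ^ 2 - β)
    (lam₁ lam₂ : ℂ) (h1 : lam₁ = -(α : ℂ) - s) (h2 : lam₂ = -(α : ℂ) + s)
    (γ ξ : ℕ → ℂ)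
    (hrec : ∀ i : ℕ, ξ (i + 2) + 2 * α * ξ (i + 1) + β * ξ i = γ i) :
    ∃ ω₁ ω₂ : ℂ, ∀ i : ℕ,
      ξ i = ω₁ * lam₁ ^ i + ω₂ * lam₂ ^ i +
        ∑ τ ∈ Finset.range i, ∑ r ∈ Finset.range τ,
          γ r * lam₁ ^ (i + r) / lam₁ ^ (2 * τ) * (β : ℂ) ^ (τ - 1 - r) := by
  have hsum : lam₁ + lam₂ = -2 * α := by rw [h1, h2]; ring
  have hprod : lam₁ * lam₂ = β := by rw [h1, h2]; linear_combination -hs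
  have hl₁ : lam₁ ≠ 0 := by
    intro h
    apply hβ
    have : (β : ℂ) = 0 := by rw [← hprod, h, zero_mul]
    exact_mod_cast this
  have hl : lam₁ ≠ lam₂ := by
    intro h
    apply hαβ
    have hs0 : s = 0 := by linear_combination (h1 - h2 - h) / 2
    have : (α : ℂ) ^ 2 = β := by rw [hs0] at hs; linear_combination -hs
    exact_mod_cast this
  set F := duhamelSum lam₁ (duhamelSum lam₂ γ)
  obtain ⟨ω₁, ω₂, hω⟩ := exists_eq_mul_pow_add_mul_pow hl (u := ξ - F) fun i => by
    simp only [Pi.sub_apply, F, duhamelSum_duhamelSum_add_two, hsum, hprod]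
    linear_combination hrec i
  refine ⟨ω₁, ω₂, fun i => ?_⟩
  rw [← hω i, Pi.sub_apply, sub_add_eq_add_sub, eq_sub_iff_add_eq, add_left_cancel_iff,
    ← hprod]
  refine sum_congr rfl fun τ hτ => ?_
  rw [duhamelSum, mul_sum]
  exact sum_congr rfl fun r hr =>
    (mul_pow_div_pow_mul_mul_pow hl₁ _ _ (mem_range.mp hr) (mem_range.mp hτ)).symm
end

section
/- Let α, β ∈ ℝ with β ≠ 0, and let γ₀, …, γ_k ∈ ℝ. Suppose ξ₀, …, ξ_k satisfy ξ_{i+2} + 2α ξ_{i+1} + β ξᵢ = γᵢ for 0 ≤ i ≤ k-2, together with the terminal conditions ξ_{k-1} = (1/β)(γ_{k-1} - (2α/β)γ_k) and ξ_k = (1/β)γ_k. Then the polynomial y_d(t) = Σ_{i=0}^k ξᵢ tⁱ/i! satisfies y_d'' + 2α y_d' + β y_d = Σ_{i=0}^k γᵢ tⁱ/i! for all t ∈ ℝ. -/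
/-!
Extend `ξ` by zero beyond `k`. Differentiating the truncated Taylor sum `∑ ξᵢ tⁱ/i!` then just
shifts its coefficients, so `y_d'' + 2α y_d' + β y_d` is the Taylor sum with coefficients
`ξᵢ₊₂ + 2α ξᵢ₊₁ + β ξᵢ`. For `i ≤ k - 2` these are `γᵢ` by the recurrence, and for `i = k - 1, k`
(where the shifted coefficients vanish) by the two terminal conditions.
-/

open Finset

noncomputable section

def taylorSum (n : ℕ) (c : ℕ → ℝ) (t : ℝ) : ℝ :=
  ∑ i ∈ range n, c i * t ^ i / i.factorial

theorem taylorSum_congr {n : ℕ} {c d : ℕ → ℝ} (h : ∀ i < n, c i = d i) :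
    taylorSum n c = taylorSum n d := by
  funext t
  exact sum_congr rfl fun i hi => by rw [h i (mem_range.mp hi)]

theorem taylorSum_add_mul_add_mul (n : ℕ) (c d e : ℕ → ℝ) (a b t : ℝ) :
    taylorSum n c t + a * taylorSum n d t + b * taylorSum n e t
      = taylorSum n (fun i => c i + a * d i + b * e i) t := by
  simp only [taylorSum, mul_sum, ← sum_add_distrib]
  exact sum_congr rfl fun i _ => by ring

theorem hasDerivAt_taylorSum_succ (n : ℕ) (c : ℕ → ℝ) (t : ℝ) :
    HasDerivAt (taylorSum (n + 1) c) (taylorSum n (fun i => c (i + 1)) t) t := by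
  have hsum : HasDerivAt (taylorSum (n + 1) c)
      (∑ i ∈ range (n + 1), c i / i.factorial * (i * t ^ (i - 1))) t := by
    have hc : taylorSum (n + 1) c = fun s => ∑ i ∈ range (n + 1), c i / i.factorial * s ^ i :=
      funext fun s => sum_congr rfl fun i _ => by ring
    rw [hc]
    exact HasDerivAt.fun_sum fun i _ => (hasDerivAt_pow i t).const_mul (c i / i.factorial)
  convert hsum using 1
  rw [sum_range_succ']
  simp only [taylorSum, Nat.factorial_succ, Nat.cast_mul, Nat.cast_succ, CharP.cast_eq_zero,
    zero_mul, mul_zero, add_zero, Nat.add_sub_cancel]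
  refine sum_congr rfl fun i _ => ?_
  have : (i.factorial : ℝ) ≠ 0 := by positivity
  field_simp

theorem deriv_taylorSum_of_eq_zero {n : ℕ} {c : ℕ → ℝ} (hc : c n = 0) :
    deriv (taylorSum n c) = taylorSum n (fun i => c (i + 1)) := by
  funext t
  cases n with
  | zero =>
    have h0 : taylorSum 0 c = fun _ => 0 := funext fun _ => sum_range_zero _
    simp [h0, taylorSum]
  | succ m =>
    rw [(hasDerivAt_taylorSum_succ m c t).deriv, taylorSum, taylorSum, sum_range_succ, hc]
    simp

theorem truncated_recurrence {α β : ℝ} (hβ : β ≠ 0) {k : ℕ} {γ ξ : ℕ → ℝ}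
    (hrec : ∀ i : ℕ, i + 2 ≤ k → ξ (i + 2) + 2 * α * ξ (i + 1) + β * ξ i = γ i)
    (hterm1 : ξ (k - 1) = (1 / β) * (γ (k - 1) - (2 * α / β) * γ k))
    (hterm2 : ξ k = (1 / β) * γ k) {i : ℕ} (hi : i ≤ k) :
    let ξ' := fun j => if j ≤ k then ξ j else 0
    ξ' (i + 2) + 2 * α * ξ' (i + 1) + β * ξ' i = γ i := by
  intro ξ'
  obtain hi2 | rfl | rfl : i + 2 ≤ k ∨ i + 1 = k ∨ i = k := by omega
  · simpa [ξ', hi2, show i + 1 ≤ k by omega, hi] using hrec i hi2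
  · simp only [ξ', le_refl, if_true, show ¬ i + 1 + 1 ≤ i + 1 by omega, if_false, hi]
    rw [Nat.add_sub_cancel] at hterm1
    rw [hterm1, hterm2]
    field_simp
    ring
  · simp only [ξ', le_refl, if_true, show ¬ i + 2 ≤ i by omega, show ¬ i + 1 ≤ i by omega,
      if_false, hterm2]
    field_simp
    ring

end

theorem stmt4_general (α β : ℝ) (hβ : β ≠ 0) (k : ℕ) (γ ξ : ℕ → ℝ)
    (hrec : ∀ i : ℕ, i + 2 ≤ k → ξ (i + 2) + 2 * α * ξ (i + 1) + β * ξ i = γ i)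
    (hterm1 : ξ (k - 1) = (1 / β) * (γ (k - 1) - (2 * α / β) * γ k))
    (hterm2 : ξ k = (1 / β) * γ k)
    (yd : ℝ → ℝ)
    (hyd : ∀ t : ℝ, yd t = ∑ i ∈ Finset.range (k + 1), ξ i * t ^ i / (Nat.factorial i)) :
    ∀ t : ℝ, deriv (deriv yd) t + 2 * α * deriv yd t + β * yd t
      = ∑ i ∈ Finset.range (k + 1), γ i * t ^ i / (Nat.factorial i) := by
  set ξ' := fun j => if j ≤ k then ξ j else 0
  have hyd' : yd = taylorSum (k + 1) ξ' :=
    (funext hyd).trans (taylorSum_congr fun i hi => (if_pos (by omega)).symm)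
  have hd1 : deriv yd = taylorSum (k + 1) (fun i => ξ' (i + 1)) := by
    rw [hyd', deriv_taylorSum_of_eq_zero (by simp [ξ'])]
  have hd2 : deriv (deriv yd) = taylorSum (k + 1) (fun i => ξ' (i + 2)) := by
    rw [hd1, deriv_taylorSum_of_eq_zero (by simp [ξ'])]
  intro t
  rw [hd2, hd1, hyd', taylorSum_add_mul_add_mul]
  exact congrFun (taylorSum_congr fun i hi =>
    truncated_recurrence hβ hrec hterm1 hterm2 (by omega)) t

theorem stmt4 (α β : ℝ) (hβ : β ≠ 0) (k : ℕ) (hk : 1 ≤ k) (γ ξ : ℕ → ℝ)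
    (hrec : ∀ i : ℕ, i + 2 ≤ k → ξ (i + 2) + 2 * α * ξ (i + 1) + β * ξ i = γ i)
    (hterm1 : ξ (k - 1) = (1 / β) * (γ (k - 1) - (2 * α / β) * γ k))
    (hterm2 : ξ k = (1 / β) * γ k)
    (yd : ℝ → ℝ)
    (hyd : ∀ t : ℝ, yd t = ∑ i ∈ Finset.range (k + 1), ξ i * t ^ i / (Nat.factorial i)) :
    ∀ t : ℝ, deriv (deriv yd) t + 2 * α * deriv yd t + β * yd t
      = ∑ i ∈ Finset.range (k + 1), γ i * t ^ i / (Nat.factorial i) :=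
  stmt4_general α β hβ k γ ξ hrec hterm1 hterm2 yd hyd
end

section
/- Let α, β ∈ ℝ with β ≠ 0 and 1 - 2α + β ≠ 0, and let γ₀, …, γ_k ∈ ℝ. Suppose ξ₀, …, ξ_k satisfy ξ_{i+2} + 2α ξ_{i+1} + β ξᵢ = γᵢ for 0 ≤ i ≤ k-2, with ξ_{k-1} = (1/β)(γ_{k-1} - (2α/β)γ_k) and ξ_k = (1/β)γ_k. Define the falling-factorial polynomials h_i(t) = t(t-1)⋯(t-i+1)/i! on ℤ, and y_d(t) = Σ_{i=0}^k ξᵢ h_i(t). Then Δ²y_d(t) + 2α Δy_d(t) + β y_d(t) = Σ_{i=0}^k γᵢ h_i(t) for all t ∈ ℤ, where Δy(t) = y(t+1) - y(t). -/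
/-!
Up to the factor `1 / i!`, `hᵢ(t)` is the descending Pochhammer product, so `hᵢ(t)` is the
generalized binomial coefficient `Ring.choose t i`, and Pascal's rule says `Δ hᵢ₊₁ = hᵢ`. Hence `Δ`
acts on the coefficients of `Σ ξᵢ hᵢ` as the shift `ξᵢ ↦ ξᵢ₊₁`, and the coefficient of `hᵢ` in
`Δ²y + 2αΔy + βy` is `ξᵢ₊₂ + 2αξᵢ₊₁ + βξᵢ` with `ξ` read as `0` beyond `k`. The recurrence and the
two terminal conditions say exactly that this coefficient is `γᵢ`.
-/

open Finset

theorem prod_range_sub_div_factorial_eq_choose {K : Type*} [Field K] [CharZero K] (x : K)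
    (n : ℕ) : (∏ j ∈ range n, (x - j)) / n.factorial = Ring.choose x n := by
  rw [Ring.choose_eq_smul, ← Polynomial.aeval_eq_smeval, ← descPochhammer_eval_eq_prod_range,
    Polynomial.aeval_def, ← Polynomial.eval_map, algebraMap_int_eq, descPochhammer_map,
    smul_eq_mul, div_eq_inv_mul]

section BinomialSeries

variable {R : Type*} [Ring R] [BinomialRing R]

theorem sum_mul_choose_add_one_sub (c : ℕ → R) (n : ℕ) (r : R) :
    ∑ i ∈ range (n + 1), c i * Ring.choose (r + 1) i
      - ∑ i ∈ range (n + 1), c i * Ring.choose r i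
      = ∑ i ∈ range n, c (i + 1) * Ring.choose r i := by
  rw [sum_range_succ', sum_range_succ', Ring.choose_zero_right, Ring.choose_zero_right,
    add_sub_add_right_eq_sub, ← sum_sub_distrib]
  refine sum_congr rfl fun i _ => ?_
  rw [Ring.choose_succ_succ, mul_add, add_sub_cancel_right]

theorem sum_mul_choose_second_difference (c : ℕ → R) (n : ℕ) (r : R) :
    ∑ i ∈ range (n + 2), c i * Ring.choose (r + 2) i
      - 2 * ∑ i ∈ range (n + 2), c i * Ring.choose (r + 1) i
      + ∑ i ∈ range (n + 2), c i * Ring.choose r i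
      = ∑ i ∈ range n, c (i + 2) * Ring.choose r i := by
  have hr : r + 2 = r + 1 + 1 := by rw [add_assoc, one_add_one_eq_two]
  rw [← sum_mul_choose_add_one_sub (fun i => c (i + 1)) n r,
    ← sum_mul_choose_add_one_sub c (n + 1) r, ← sum_mul_choose_add_one_sub c (n + 1) (r + 1), hr]
  noncomm_ring

end BinomialSeries

theorem sum_mul_eq_of_linear_recurrence {R : Type*} [CommRing R] (a b : R) (ξ γ v : ℕ → R)
    (m : ℕ) (hrec : ∀ i < m, ξ (i + 2) + a * ξ (i + 1) + b * ξ i = γ i)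
    (hpenult : a * ξ (m + 1) + b * ξ m = γ m) (hlast : b * ξ (m + 1) = γ (m + 1)) :
    ∑ i ∈ range m, ξ (i + 2) * v i + a * ∑ i ∈ range (m + 1), ξ (i + 1) * v i
      + b * ∑ i ∈ range (m + 2), ξ i * v i
      = ∑ i ∈ range (m + 2), γ i * v i := by
  have hbulk : ∑ i ∈ range m, ξ (i + 2) * v i + a * ∑ i ∈ range m, ξ (i + 1) * v i
      + b * ∑ i ∈ range m, ξ i * v i = ∑ i ∈ range m, γ i * v i := by
    rw [mul_sum, mul_sum, ← sum_add_distrib, ← sum_add_distrib]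
    refine sum_congr rfl fun i hi => ?_
    rw [← hrec i (mem_range.mp hi)]
    ring
  simp only [sum_range_succ]
  linear_combination hbulk + hpenult * v m + hlast * v (m + 1)

theorem stmt5_general (α β : ℝ) (hβ : β ≠ 0)
    (k : ℕ) (hk : 1 ≤ k) (γ ξ : ℕ → ℝ)
    (hrec : ∀ i : ℕ, i + 2 ≤ k → ξ (i + 2) + 2 * α * ξ (i + 1) + β * ξ i = γ i)
    (hterm1 : ξ (k - 1) = (1 / β) * (γ (k - 1) - (2 * α / β) * γ k))
    (hterm2 : ξ k = (1 / β) * γ k)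
    (h : ℕ → ℤ → ℝ)
    (hh : ∀ i : ℕ, ∀ t : ℤ,
      h i t = (∏ j ∈ Finset.range i, ((t : ℝ) - j)) / (Nat.factorial i))
    (yd : ℤ → ℝ)
    (hyd : ∀ t : ℤ, yd t = ∑ i ∈ Finset.range (k + 1), ξ i * h i t) :
    ∀ t : ℤ,
      (yd (t + 2) - 2 * yd (t + 1) + yd t)
        + 2 * α * (yd (t + 1) - yd t) + β * yd t
      = ∑ i ∈ Finset.range (k + 1), γ i * h i t := by
  obtain ⟨m, rfl⟩ := Nat.exists_eq_add_of_le' hk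
  intro t
  have hy : ∀ s : ℤ, yd s = ∑ i ∈ range (m + 2), ξ i * Ring.choose (s : ℝ) i := fun s => by
    simp only [hyd, hh, prod_range_sub_div_factorial_eq_choose]
  have hΔ : yd (t + 1) - yd t = ∑ i ∈ range (m + 1), ξ (i + 1) * Ring.choose (t : ℝ) i := by
    rw [hy, hy]
    push_cast
    exact sum_mul_choose_add_one_sub ξ (m + 1) t
  have hΔ2 : yd (t + 2) - 2 * yd (t + 1) + yd t
      = ∑ i ∈ range m, ξ (i + 2) * Ring.choose (t : ℝ) i := by
    rw [hy, hy, hy]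
    push_cast
    exact sum_mul_choose_second_difference ξ m t
  simp only [hh, prod_range_sub_div_factorial_eq_choose]
  rw [hΔ2, hΔ, hy]
  rw [Nat.add_sub_cancel] at hterm1
  refine sum_mul_eq_of_linear_recurrence _ _ ξ γ _ m (fun i hi => hrec i (by omega)) ?_ ?_
  · rw [hterm1, hterm2]
    field_simp
    ring
  · rw [hterm2]
    field_simp

theorem stmt5 (α β : ℝ) (hβ : β ≠ 0) (hreg : 1 - 2 * α + β ≠ 0)
    (k : ℕ) (hk : 1 ≤ k) (γ ξ : ℕ → ℝ)
    (hrec : ∀ i : ℕ, i + 2 ≤ k → ξ (i + 2) + 2 * α * ξ (i + 1) + β * ξ i = γ i)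
    (hterm1 : ξ (k - 1) = (1 / β) * (γ (k - 1) - (2 * α / β) * γ k))
    (hterm2 : ξ k = (1 / β) * γ k)
    (h : ℕ → ℤ → ℝ)
    (hh : ∀ i : ℕ, ∀ t : ℤ,
      h i t = (∏ j ∈ Finset.range i, ((t : ℝ) - j)) / (Nat.factorial i))
    (yd : ℤ → ℝ)
    (hyd : ∀ t : ℤ, yd t = ∑ i ∈ Finset.range (k + 1), ξ i * h i t) :
    ∀ t : ℤ,
      (yd (t + 2) - 2 * yd (t + 1) + yd t)
        + 2 * α * (yd (t + 1) - yd t) + β * yd t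
      = ∑ i ∈ Finset.range (k + 1), γ i * h i t :=
  stmt5_general α β hβ k hk γ ξ hrec hterm1 hterm2 h hh yd hyd
end
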